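/- Let h₁, …, h_n : (A,κ) → (B,λ) be digitally (κ,λ)-continuous maps with (A,κ) and (B,λ) digitally connected. Then the digital higher m-homotopic distance satisfies D_m(h₁,…,h_n) ≤ cat_m(A,κ). -/
import Mathlib


namespace DigitalTop

/-- The `c_p`-adjacency relation on `ℤ^r`: distinct points such that at most `p`
coordinates differ by exactly `1`, and all coordinates not differing by `1` are equal. -/
def cAdj (r p : ℕ) (a a' : Fin r → ℤ) : Prop :=
  a ≠ a' ∧
  ((Finset.univ.filter fun q : Fin r => |a q - a' q| = 1).card ≤ p) ∧
  ∀ s : Fin r, |a s - a' s| ≠ 1 → a s = a' s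

/-- The `2`-adjacency on the digital interval in `ℤ`. -/
def intAdj (t t' : ℤ) : Prop := |t - t'| = 1

/-- Digital `(adjA, adjB)`-continuity of `f` on `A`, mapping into `B`. -/
def DigContinuousOn {α β : Type*} (adjA : α → α → Prop) (adjB : β → β → Prop)
    (A : Set α) (B : Set β) (f : α → β) : Prop :=
  (∀ a ∈ A, f a ∈ B) ∧
  ∀ a ∈ A, ∀ a' ∈ A, adjA a a' → f a = f a' ∨ adjB (f a) (f a')

/-- `K : A × [0,z]_ℤ → B` is a digital homotopy (in `z` steps): each stage
`K (·, t)` is digitally continuous and each track `K (a, ·)` is digitally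
`(2, adjB)`-continuous on `[0,z]_ℤ`. -/
def IsDigHomotopy {α β : Type*} (adjA : α → α → Prop) (adjB : β → β → Prop)
    (A : Set α) (B : Set β) (z : ℕ) (K : α → ℤ → β) : Prop :=
  (∀ t ∈ Set.Icc (0 : ℤ) (z : ℤ), DigContinuousOn adjA adjB A B fun a => K a t) ∧
  ∀ a ∈ A, ∀ t ∈ Set.Icc (0 : ℤ) (z : ℤ), ∀ t' ∈ Set.Icc (0 : ℤ) (z : ℤ),
    intAdj t t' → K a t = K a t' ∨ adjB (K a t) (K a t')

/-- `h` and `k` are digitally `(adjA, adjB)`-homotopic on `A` (into `B`). -/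
def DigHomotopic {α β : Type*} (adjA : α → α → Prop) (adjB : β → β → Prop)
    (A : Set α) (B : Set β) (h k : α → β) : Prop :=
  ∃ (z : ℕ) (K : α → ℤ → β),
    IsDigHomotopy adjA adjB A B z K ∧
    (∀ a ∈ A, K a 0 = h a) ∧ (∀ a ∈ A, K a (z : ℤ) = k a)

/-- `(A, adjA)` is digitally connected: any two points of `A` are joined by a
digital path in `A` whose consecutive points are equal or adjacent. -/
def DigConnected {α : Type*} (adjA : α → α → Prop) (A : Set α) : Prop :=
  ∀ a ∈ A, ∀ b ∈ A, ∃ (n : ℕ) (f : ℕ → α),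
    f 0 = a ∧ f n = b ∧ (∀ i ≤ n, f i ∈ A) ∧
    ∀ i < n, f i = f (i + 1) ∨ adjA (f i) (f (i + 1))

/-- `adj ≥_d adj'`: `adj` dominates `adj'`. -/
def Dominates {α : Type*} (adj adj' : α → α → Prop) : Prop :=
  ∀ a a', adj a a' → adj' a a'

/-- The normal (strong) product adjacency `NP(adjA, adjB)` on a product. -/
def NP {α β : Type*} (adjA : α → α → Prop) (adjB : β → β → Prop) :
    α × β → α × β → Prop :=
  fun x y => x ≠ y ∧ (x.1 = y.1 ∨ adjA x.1 y.1) ∧ (x.2 = y.2 ∨ adjB x.2 y.2)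

/-- The normal (strong) product adjacency `NP_n(adjB, …, adjB)` on `Bⁿ`. -/
def NPn {β : Type*} (adjB : β → β → Prop) (n : ℕ) :
    (Fin n → β) → (Fin n → β) → Prop :=
  fun x y => x ≠ y ∧ ∀ i, x i = y i ∨ adjB (x i) (y i)

/-- `X` satisfies the digital `m`-homotopic-distance condition for `h, k`: every
digitally continuous map `φ` from every `m`-dimensional digital complex `(P, c_δ)`
into `X` satisfies `h ∘ φ ≃ k ∘ φ`. -/
def DmAt {α β : Type*} (m : ℕ) (adjA : α → α → Prop) (adjB : β → β → Prop)
    (X : Set α) (B : Set β) (h k : α → β) : Prop :=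
  ∀ P : Set (Fin m → ℤ), P.Finite →
    ∀ δ : ℕ, 1 ≤ δ → δ ≤ m →
      ∀ φ : (Fin m → ℤ) → α,
        DigContinuousOn (cAdj m δ) adjA P X φ →
        DigHomotopic (cAdj m δ) adjB P B (h ∘ φ) (k ∘ φ)

/-- The digital `m`-homotopic distance `D_m(h, k)` (an element of `ℕ∞`,
`⊤` if no finite decomposition exists). -/
noncomputable def Dm {α β : Type*} (m : ℕ) (adjA : α → α → Prop) (adjB : β → β → Prop)
    (A : Set α) (B : Set β) (h k : α → β) : ℕ∞ :=
  sInf {n : ℕ∞ | ∃ q : ℕ, n = (q : ℕ∞) ∧ ∃ X : Fin (q + 1) → Set α,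
    A = ⋃ j, X j ∧ ∀ j, DmAt m adjA adjB (X j) B h k}

/-- The digital homotopic distance `D(h, k)`. -/
noncomputable def Ddist {α β : Type*} (adjA : α → α → Prop) (adjB : β → β → Prop)
    (A : Set α) (B : Set β) (h k : α → β) : ℕ∞ :=
  sInf {n : ℕ∞ | ∃ q : ℕ, n = (q : ℕ∞) ∧ ∃ X : Fin (q + 1) → Set α,
    A = ⋃ j, X j ∧ ∀ j, DigHomotopic adjA adjB (X j) B h k}

/-- `X` satisfies the digital higher `m`-homotopic-distance condition for
`h₁, …, h_n`: pushed forward along any `φ` from an `m`-dimensional digital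
complex into `X`, consecutive maps become digitally homotopic. -/
def DmAtH {α β : Type*} (m : ℕ) (adjA : α → α → Prop) (adjB : β → β → Prop)
    (X : Set α) (B : Set β) {n : ℕ} (h : Fin n → α → β) : Prop :=
  ∀ P : Set (Fin m → ℤ), P.Finite →
    ∀ δ : ℕ, 1 ≤ δ → δ ≤ m →
      ∀ φ : (Fin m → ℤ) → α,
        DigContinuousOn (cAdj m δ) adjA P X φ →
        ∀ i : Fin n, ∀ hi : (i : ℕ) + 1 < n,
          DigHomotopic (cAdj m δ) adjB P B (h i ∘ φ) (h ⟨(i : ℕ) + 1, hi⟩ ∘ φ)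

/-- The digital higher `m`-homotopic distance `D_m(h₁, …, h_n)`. -/
noncomputable def DmH {α β : Type*} (m : ℕ) (adjA : α → α → Prop) (adjB : β → β → Prop)
    (A : Set α) (B : Set β) {n : ℕ} (h : Fin n → α → β) : ℕ∞ :=
  sInf {k : ℕ∞ | ∃ q : ℕ, k = (q : ℕ∞) ∧ ∃ X : Fin (q + 1) → Set α,
    A = ⋃ j, X j ∧ ∀ j, DmAtH m adjA adjB (X j) B h}

/-- The digital higher homotopic distance `D(h₁, …, h_n)`. -/
noncomputable def DdistH {α β : Type*} (adjA : α → α → Prop) (adjB : β → β → Prop)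
    (A : Set α) (B : Set β) {n : ℕ} (h : Fin n → α → β) : ℕ∞ :=
  sInf {k : ℕ∞ | ∃ q : ℕ, k = (q : ℕ∞) ∧ ∃ X : Fin (q + 1) → Set α,
    A = ⋃ j, X j ∧ ∀ j, ∀ i : Fin n, ∀ hi : (i : ℕ) + 1 < n,
      DigHomotopic adjA adjB (X j) B (h i) (h ⟨(i : ℕ) + 1, hi⟩)}

/-- `X` satisfies the digital `m`-LS-category condition in `A`: for every `φ` from an
`m`-dimensional digital complex into `X`, the composite with the inclusion
`X ↪ A` is digitally nullhomotopic in `A`. -/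
def CatmAt {α : Type*} (m : ℕ) (adjA : α → α → Prop) (X A : Set α) : Prop :=
  ∀ P : Set (Fin m → ℤ), P.Finite →
    ∀ δ : ℕ, 1 ≤ δ → δ ≤ m →
      ∀ φ : (Fin m → ℤ) → α,
        DigContinuousOn (cAdj m δ) adjA P X φ →
        ∃ a₀ ∈ A, DigHomotopic (cAdj m δ) adjA P A φ (fun _ => a₀)

/-- The digital `m`-Lusternik–Schnirelmann category `cat_m(A, adjA)`. -/
noncomputable def Catm {α : Type*} (m : ℕ) (adjA : α → α → Prop) (A : Set α) : ℕ∞ :=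
  sInf {n : ℕ∞ | ∃ q : ℕ, n = (q : ℕ∞) ∧ ∃ X : Fin (q + 1) → Set α,
    A = ⋃ j, X j ∧ ∀ j, CatmAt m adjA (X j) A}

/-- `X` satisfies the digital `m`-LS-category condition for the map `h`. -/
def CatmMapAt {α β : Type*} (m : ℕ) (adjA : α → α → Prop) (adjB : β → β → Prop)
    (X : Set α) (B : Set β) (h : α → β) : Prop :=
  ∀ P : Set (Fin m → ℤ), P.Finite →
    ∀ δ : ℕ, 1 ≤ δ → δ ≤ m →
      ∀ φ : (Fin m → ℤ) → α,
        DigContinuousOn (cAdj m δ) adjA P X φ →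
        ∃ b₀ ∈ B, DigHomotopic (cAdj m δ) adjB P B (h ∘ φ) (fun _ => b₀)

/-- The digital `m`-Lusternik–Schnirelmann category `cat_m(h; adjA, adjB)` of a map. -/
noncomputable def CatmMap {α β : Type*} (m : ℕ) (adjA : α → α → Prop) (adjB : β → β → Prop)
    (A : Set α) (B : Set β) (h : α → β) : ℕ∞ :=
  sInf {n : ℕ∞ | ∃ q : ℕ, n = (q : ℕ∞) ∧ ∃ X : Fin (q + 1) → Set α,
    A = ⋃ j, X j ∧ ∀ j, CatmMapAt m adjA adjB (X j) B h}

/-- The digital path space `A^{[0,z]_ℤ}`: digitally `(2, adjA)`-continuous maps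
`[0,z]_ℤ → A`. -/
def PathSpace {α : Type*} (adjA : α → α → Prop) (A : Set α) (z : ℕ) : Set (ℤ → α) :=
  {ϑ | DigContinuousOn intAdj adjA (Set.Icc (0 : ℤ) (z : ℤ)) A ϑ}

/-- The adjacency on the digital path space `A^{[0,z]_ℤ}`. -/
def pathAdj {α : Type*} (adjA : α → α → Prop) (z : ℕ) : (ℤ → α) → (ℤ → α) → Prop :=
  fun ϑ θ => ∀ t ∈ Set.Icc (0 : ℤ) (z : ℤ), ∀ t' ∈ Set.Icc (0 : ℤ) (z : ℤ),
    (t = t' ∨ intAdj t t') → ϑ t = θ t' ∨ adjA (ϑ t) (θ t')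

/-- The digital `m`-topological complexity `TC^m(A, adjA)`: the least `q` such
that `A × A = X_0 ∪ ⋯ ∪ X_q` where each `X_j` carries a digitally continuous
`s_j : X_j → A^{[0,z]_ℤ}` with `π ∘ s_j ∘ φ ≃ φ` for every digitally continuous
`φ : P → X_j` from every `m`-dimensional digital complex `(P, c_δ)`. -/
noncomputable def TCm {α : Type*} (m : ℕ) (adjA : α → α → Prop) (A : Set α) : ℕ∞ :=
  sInf {n : ℕ∞ | ∃ q : ℕ, n = (q : ℕ∞) ∧ ∃ X : Fin (q + 1) → Set (α × α),
    (A ×ˢ A) = ⋃ j, X j ∧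
    ∀ j, ∃ (z : ℕ) (s : α × α → ℤ → α),
      DigContinuousOn (NP adjA adjA) (pathAdj adjA z) (X j) (PathSpace adjA A z) s ∧
      ∀ P : Set (Fin m → ℤ), P.Finite →
        ∀ δ : ℕ, 1 ≤ δ → δ ≤ m →
          ∀ φ : (Fin m → ℤ) → α × α,
            DigContinuousOn (cAdj m δ) (NP adjA adjA) P (X j) φ →
            DigHomotopic (cAdj m δ) (NP adjA adjA) P (A ×ˢ A)
              (fun x => (s (φ x) 0, s (φ x) (z : ℤ))) φ}

/-- The digital `m`-topological complexity `TC^m(h; adjA, adjB)` of a map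
`h : (A, adjA) → (B, adjB)`, using `π_h(ϑ) = (ϑ(0), h(ϑ(z)))`. -/
noncomputable def TCmMap {α β : Type*} (m : ℕ) (adjA : α → α → Prop) (adjB : β → β → Prop)
    (A : Set α) (B : Set β) (h : α → β) : ℕ∞ :=
  sInf {n : ℕ∞ | ∃ q : ℕ, n = (q : ℕ∞) ∧ ∃ X : Fin (q + 1) → Set (α × β),
    (A ×ˢ B) = ⋃ j, X j ∧
    ∀ j, ∃ (z : ℕ) (s : α × β → ℤ → α),
      DigContinuousOn (NP adjA adjB) (pathAdj adjA z) (X j) (PathSpace adjA A z) s ∧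
      ∀ P : Set (Fin m → ℤ), P.Finite →
        ∀ δ : ℕ, 1 ≤ δ → δ ≤ m →
          ∀ φ : (Fin m → ℤ) → α × β,
            DigContinuousOn (cAdj m δ) (NP adjA adjB) P (X j) φ →
            DigHomotopic (cAdj m δ) (NP adjA adjB) P (A ×ˢ B)
              (fun x => (s (φ x) 0, h (s (φ x) (z : ℤ)))) φ}

/-- A digital fibration: a digitally continuous map with the digital homotopy
lifting property with respect to every digital image `(B, c_δ) ⊆ ℤ^d`. -/
def DigitalFibration {r r' : ℕ} (p p' : ℕ) (A : Set (Fin r → ℤ)) (A' : Set (Fin r' → ℤ))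
    (h : (Fin r → ℤ) → (Fin r' → ℤ)) : Prop :=
  DigContinuousOn (cAdj r p) (cAdj r' p') A A' h ∧
  ∀ (d : ℕ) (B : Set (Fin d → ℤ)) (δ : ℕ), 1 ≤ δ → δ ≤ d →
    ∀ k : (Fin d → ℤ) → (Fin r → ℤ),
      DigContinuousOn (cAdj d δ) (cAdj r p) B A k →
      ∀ (z : ℕ) (K : (Fin d → ℤ) → ℤ → (Fin r' → ℤ)),
        IsDigHomotopy (cAdj d δ) (cAdj r' p') B A' z K →
        (∀ b ∈ B, K b 0 = h (k b)) →
        ∃ K' : (Fin d → ℤ) → ℤ → (Fin r → ℤ),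
          IsDigHomotopy (cAdj d δ) (cAdj r p) B A z K' ∧
          (∀ b ∈ B, ∀ t ∈ Set.Icc (0 : ℤ) (z : ℤ), h (K' b t) = K b t) ∧
          (∀ b ∈ B, K' b 0 = k b)

/-- A digital homotopy equivalence `ω : (A, adjA) → (B, adjB)`. -/
def DigHomotopyEquiv {α β : Type*} (adjA : α → α → Prop) (adjB : β → β → Prop)
    (A : Set α) (B : Set β) (ω : α → β) : Prop :=
  DigContinuousOn adjA adjB A B ω ∧
  ∃ ω' : β → α, DigContinuousOn adjB adjA B A ω' ∧
    DigHomotopic adjA adjA A A (ω' ∘ ω) id ∧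
    DigHomotopic adjB adjB B B (ω ∘ ω') id

-- helper lemmas
lemma cAdj_symm {r p : ℕ} {a a' : Fin r → ℤ} (h : cAdj r p a a') : cAdj r p a' a := by
  obtain ⟨hne, hcard, heq⟩ := h
  refine ⟨hne.symm, ?_, fun s hs => (heq s (by rwa [abs_sub_comm])).symm⟩
  calc (Finset.univ.filter fun q : Fin r => |a' q - a q| = 1).card
      = (Finset.univ.filter fun q : Fin r => |a q - a' q| = 1).card := by
        congr 1; apply Finset.filter_congr; intro x _; rw [abs_sub_comm]
    _ ≤ p := hcard

lemma digHomotopic_symm {α β : Type*} {adjA : α → α → Prop} {adjB : β → β → Prop}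
    {A : Set α} {B : Set β} {f g : α → β}
    (h : DigHomotopic adjA adjB A B f g) : DigHomotopic adjA adjB A B g f := by
  obtain ⟨z, K, ⟨hst, htr⟩, h0, hz⟩ := h
  refine ⟨z, fun a t => K a ((z : ℤ) - t), ⟨?_, ?_⟩, ?_, ?_⟩
  · intro t ht
    simp only [Set.mem_Icc] at ht
    exact hst ((z : ℤ) - t) ⟨by omega, by omega⟩
  · intro a ha t ht t' ht' htt
    simp only [Set.mem_Icc] at ht ht'
    refine htr a ha ((z:ℤ)-t) ⟨by omega, by omega⟩ ((z:ℤ)-t') ⟨by omega, by omega⟩ ?_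
    · simp only [intAdj] at htt ⊢
      have : (z:ℤ) - t - ((z:ℤ) - t') = -(t - t') := by ring
      rw [this, abs_neg]; exact htt
  · intro a ha; simpa using hz a ha
  · intro a ha; simpa using h0 a ha


lemma digHomotopic_comp {α β γ : Type*} {adjA : α → α → Prop} {adjB : β → β → Prop}
    {adjC : γ → γ → Prop} {A : Set α} {B : Set β} {C : Set γ} {f g : α → β}
    (h : DigHomotopic adjA adjB A B f g) (u : β → γ)
    (hu : DigContinuousOn adjB adjC B C u) :
    DigHomotopic adjA adjC A C (u ∘ f) (u ∘ g) := by
  obtain ⟨z, K, ⟨hst, htr⟩, h0, hz⟩ := h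
  refine ⟨z, fun a t => u (K a t), ⟨?_, ?_⟩, ?_, ?_⟩
  · intro t ht
    obtain ⟨hmem, hadj⟩ := hst t ht
    refine ⟨fun a ha => hu.1 _ (hmem a ha), fun a ha a' ha' haa => ?_⟩
    rcases hadj a ha a' ha' haa with he | hb
    · exact Or.inl (by simp [he])
    · exact hu.2 _ (hmem a ha) _ (hmem a' ha') hb
  · intro a ha t ht t' ht' htt
    rcases htr a ha t ht t' ht' htt with he | hb
    · exact Or.inl (by simp [he])
    · exact hu.2 _ ((hst t ht).1 a ha) _ ((hst t' ht').1 a ha) hb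
  · intro a ha; simp [h0 a ha]
  · intro a ha; simp [hz a ha]

lemma digHomotopic_trans {α β : Type*} {adjA : α → α → Prop} {adjB : β → β → Prop}
    {A : Set α} {B : Set β} {f g k : α → β}
    (h1 : DigHomotopic adjA adjB A B f g) (h2 : DigHomotopic adjA adjB A B g k) :
    DigHomotopic adjA adjB A B f k := by
  obtain ⟨z1, K1, ⟨hst1, htr1⟩, h10, h1z⟩ := h1
  obtain ⟨z2, K2, ⟨hst2, htr2⟩, h20, h2z⟩ := h2
  refine ⟨z1 + z2, fun a t => if t ≤ (z1 : ℤ) then K1 a t else K2 a (t - z1), ⟨?_, ?_⟩, ?_, ?_⟩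
  · intro t ht
    simp only [Set.mem_Icc] at ht
    push_cast at ht
    by_cases hle : t ≤ (z1 : ℤ)
    · simpa [hle] using hst1 t ⟨ht.1, hle⟩
    · simpa [hle] using hst2 (t - z1) ⟨by omega, by omega⟩
  · intro a ha t ht t' ht' htt
    simp only [Set.mem_Icc] at ht ht'
    push_cast at ht ht'
    have habs := abs_eq (by norm_num : (0:ℤ) ≤ 1) |>.mp htt
    by_cases h1le : t ≤ (z1 : ℤ)
    · by_cases h2le : t' ≤ (z1 : ℤ)
      · simpa [h1le, h2le] using htr1 a ha t ⟨ht.1, h1le⟩ t' ⟨ht'.1, h2le⟩ htt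
      · -- t = z1, t' = z1 + 1
        have htz : t = (z1 : ℤ) := by omega
        have ht'z : t' - z1 = 1 := by omega
        simp only [h1le, h2le, if_pos, if_neg, not_false_eq_true]
        have e1 : K1 a t = K2 a 0 := by rw [htz, h1z a ha, ← h20 a ha]
        rw [e1, ht'z]
        exact htr2 a ha 0 ⟨le_refl _, by positivity⟩ 1 ⟨by norm_num, by omega⟩
          (by simp [intAdj])
    · by_cases h2le : t' ≤ (z1 : ℤ)
      · -- t' = z1, t = z1 + 1
        have ht'z : t' = (z1 : ℤ) := by omega
        have htz : t - z1 = 1 := by omega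
        simp only [h1le, h2le, if_pos, if_neg, not_false_eq_true]
        have e1 : K1 a t' = K2 a 0 := by rw [ht'z, h1z a ha, ← h20 a ha]
        rw [e1, htz]
        exact htr2 a ha 1 ⟨by norm_num, by omega⟩ 0 ⟨le_refl _, by positivity⟩
          (by simp [intAdj])
      · simp only [h1le, h2le, if_neg, not_false_eq_true]
        refine htr2 a ha (t - z1) ⟨by omega, by omega⟩ (t' - z1) ⟨by omega, by omega⟩ ?_
        have : t - z1 - (t' - z1) = t - t' := by ring
        simp only [intAdj, this]; exact htt
  · intro a ha
    have : (0:ℤ) ≤ (z1:ℤ) := by positivity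
    simp [this, h10 a ha]
  · intro a ha
    by_cases hz2 : z2 = 0
    · subst hz2
      simp only [Nat.add_zero, Nat.cast_add, Nat.cast_zero, add_zero, le_refl, if_pos]
      rw [h1z a ha, ← h20 a ha]; simpa using h2z a ha
    · have : ¬ ((z1:ℤ) + z2 ≤ (z1 : ℤ)) := by
        have : (0:ℤ) < z2 := by exact_mod_cast Nat.pos_of_ne_zero hz2
        omega
      push_cast
      simp only [this, if_neg, not_false_eq_true]
      have e : (z1:ℤ) + z2 - z1 = (z2:ℤ) := by ring
      rw [e]; exact h2z a ha


lemma digHomotopic_const {α β : Type*} (adjP : α → α → Prop) (P : Set α)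
    {adjB : β → β → Prop} (hsym : ∀ b b', adjB b b' → adjB b' b)
    {B : Set β} (hconn : DigConnected adjB B) {b b' : β}
    (hb : b ∈ B) (hb' : b' ∈ B) :
    DigHomotopic adjP adjB P B (fun _ => b) (fun _ => b') := by
  obtain ⟨nn, f, hf0, hfn, hfm, hstep⟩ := hconn b hb b' hb'
  refine ⟨nn, fun _ t => f t.toNat, ⟨?_, ?_⟩, ?_, ?_⟩
  · intro t ht
    simp only [Set.mem_Icc] at ht
    exact ⟨fun a _ => hfm t.toNat (by omega), fun a _ a' _ _ => Or.inl rfl⟩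
  · intro a _ t ht t' ht' htt
    simp only [Set.mem_Icc] at ht ht'
    rcases abs_eq (by norm_num : (0:ℤ) ≤ 1) |>.mp htt with hd | hd
    · -- t = t' + 1
      have h1 : t.toNat = t'.toNat + 1 := by omega
      have h2 : t'.toNat < nn := by omega
      rcases hstep t'.toNat h2 with he | hadj
      · exact Or.inl (show f t.toNat = f t'.toNat by rw [h1, he])
      · exact Or.inr (show adjB (f t.toNat) (f t'.toNat) by rw [h1]; exact hsym _ _ hadj)
    · -- t' = t + 1
      have h1 : t'.toNat = t.toNat + 1 := by omega
      have h2 : t.toNat < nn := by omega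
      rcases hstep t.toNat h2 with he | hadj
      · exact Or.inl (show f t.toNat = f t'.toNat by rw [h1, ← he])
      · exact Or.inr (show adjB (f t.toNat) (f t'.toNat) by rw [h1]; exact hadj)
  · intro a _; simp [hf0]
  · intro a _; simp [hfn]

/-- `D_m(h₁,…,h_n) ≤ cat_m(A,κ)` for digitally continuous maps with
digitally connected domain and range. -/
theorem dmh_le_catm {r s p q : ℕ} {n : ℕ}
    (hp1 : 1 ≤ p) (hpr : p ≤ r) (hq1 : 1 ≤ q) (hqs : q ≤ s)
    (A : Set (Fin r → ℤ)) (B : Set (Fin s → ℤ))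
    (hAconn : DigConnected (cAdj r p) A) (hBconn : DigConnected (cAdj s q) B)
    (h : Fin n → (Fin r → ℤ) → (Fin s → ℤ))
    (hcont : ∀ i, DigContinuousOn (cAdj r p) (cAdj s q) A B (h i))
    (m : ℕ) (hm : 0 < m) :
    DmH m (cAdj r p) (cAdj s q) A B h ≤ Catm m (cAdj r p) A := by
  apply sInf_le_sInf
  rintro x ⟨q', rfl, X, hcov, hcat⟩
  refine ⟨q', rfl, X, hcov, fun j => ?_⟩
  intro P hPfin δ hδ1 hδm φ hφ i hi
  obtain ⟨a₀, ha₀, hnull⟩ := hcat j P hPfin δ hδ1 hδm φ hφ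
  have H1 := digHomotopic_comp hnull (h i) (hcont i)
  have H2 := digHomotopic_comp hnull (h ⟨(i : ℕ) + 1, hi⟩) (hcont ⟨(i : ℕ) + 1, hi⟩)
  have hb1 : h i a₀ ∈ B := (hcont i).1 a₀ ha₀
  have hb2 : h ⟨(i : ℕ) + 1, hi⟩ a₀ ∈ B := (hcont ⟨(i : ℕ) + 1, hi⟩).1 a₀ ha₀
  have H3 : DigHomotopic (cAdj m δ) (cAdj s q) P B
      (fun _ => h i a₀) (fun _ => h ⟨(i : ℕ) + 1, hi⟩ a₀) :=
    digHomotopic_const _ _ (fun _ _ hbb => cAdj_symm hbb) hBconn hb1 hb2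
  exact digHomotopic_trans H1 (digHomotopic_trans H3 (digHomotopic_symm H2))


end DigitalTop
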